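/- Fix h ≥ 2, a base sequence (q_i) with q_i ≥ 2, digit sets A_i ⊆ [0, q_i/h) each containing 0 and each a B_h[1] set, and an integer l ≥ 1. Let A be the set of natural numbers x such that each digit b_i(x) ∈ A_{i+1} and there exists m with b_i(x) = 0 for all i outside [m+1, m+l]. Then for every positive integer n, the number of representations of n as a sum of h nondecreasing elements of A is at most (h!)^{lh}. -/

import Mathlib

def reps (A : Set ℕ) (h n : ℕ) : Set (Fin h → ℕ) :=
  {f | Monotone f ∧ (∀ i, f i ∈ A) ∧ ∑ i, f i = n}

noncomputable def repCount (A : Set ℕ) (h n : ℕ) : ℕ := (reps A h n).ncard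

def IsBhg (A : Set ℕ) (h g : ℕ) : Prop := ∀ n, repCount A h n ≤ g

def baseProd (Q : ℕ → ℕ) (i : ℕ) : ℕ := ∏ j ∈ Finset.range i, Q j

def vdigit (Q : ℕ → ℕ) (i x : ℕ) : ℕ := (x / baseProd Q i) % Q i

private lemma digits_expand (Q : ℕ → ℕ) (x m : ℕ) :
    x % baseProd Q m = ∑ j ∈ Finset.range m, vdigit Q j x * baseProd Q j := by
  induction m with
  | zero => simp [baseProd, Nat.mod_one]
  | succ m ih =>
      rw [Finset.sum_range_succ, ← ih,
        show baseProd Q (m+1) = baseProd Q m * Q m from Finset.prod_range_succ _ _,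
        Nat.mod_mul, vdigit]
      ring

private lemma sum_div_decomp (Q : ℕ → ℕ) {h : ℕ} (f : Fin h → ℕ) (j : ℕ) :
    ∑ i, f i / baseProd Q j
      = Q j * (∑ i, f i / baseProd Q j / Q j) + ∑ i, vdigit Q j (f i) := by
  rw [Finset.mul_sum, ← Finset.sum_add_distrib]
  refine Finset.sum_congr rfl fun i _ => ?_
  rw [vdigit]
  exact (Nat.div_add_mod _ _).symm

private lemma carry_div (Q : ℕ → ℕ) (hQ : ∀ i, 0 < Q i) {h n : ℕ} (f : Fin h → ℕ)
    (hsum : ∑ i, f i = n) (hd : ∀ j, ∑ i, vdigit Q j (f i) < Q j) :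
    ∀ j, n / baseProd Q j = ∑ i, f i / baseProd Q j := by
  intro j
  induction j with
  | zero => simpa [baseProd] using hsum.symm
  | succ j ih =>
      have hb : ∀ x : ℕ, x / baseProd Q (j+1) = x / baseProd Q j / Q j := by
        intro x
        rw [show baseProd Q (j+1) = baseProd Q j * Q j from Finset.prod_range_succ _ _,
          Nat.div_div_eq_div_mul]
      simp only [hb]
      rw [ih, sum_div_decomp Q f j, Nat.mul_add_div (hQ j), Nat.div_eq_of_lt (hd j), add_zero]

private lemma carry_digit (Q : ℕ → ℕ) (hQ : ∀ i, 0 < Q i) {h n : ℕ} (f : Fin h → ℕ)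
    (hsum : ∑ i, f i = n) (hd : ∀ j, ∑ i, vdigit Q j (f i) < Q j) :
    ∀ j, vdigit Q j n = ∑ i, vdigit Q j (f i) := by
  intro j
  rw [vdigit, carry_div Q hQ f hsum hd j, sum_div_decomp Q f j, Nat.mul_add_mod,
    Nat.mod_eq_of_lt (hd j)]

private lemma reps_finite (A : Set ℕ) (h n : ℕ) : (reps A h n).Finite := by
  refine Set.Finite.subset (Set.Finite.pi (fun _ : Fin h => Set.finite_Iic n)) ?_
  intro f hf
  rw [Set.mem_pi]
  intro i _
  have := Finset.single_le_sum (f := f) (fun i _ => Nat.zero_le _) (Finset.mem_univ i)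
  rw [hf.2.2] at this
  exact this

private lemma reps_subsingleton {A : Set ℕ} {h n : ℕ} (hB : repCount A h n ≤ 1) :
    ∀ a ∈ reps A h n, ∀ b ∈ reps A h n, a = b := by
  intro a ha b hb
  by_contra hne
  have := (Set.one_lt_ncard (reps_finite A h n)).2 ⟨a, ha, b, hb, hne⟩
  rw [repCount] at hB
  omega

/-- The constructed set: digits lie in the `B_h[1]` digit sets `D i ⊆ [0, Q i / h)`
and all nonzero digits lie in a window of `l` consecutive positions `[m+1, m+l]`.
Then every positive integer has at most `(h!)^{lh}` representations as a sum of `h`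
nondecreasing elements of `A`. -/
theorem stmt5 (h : ℕ) (hh : 2 ≤ h) (Q : ℕ → ℕ) (hQ : ∀ i, 2 ≤ Q i)
    (D : ℕ → Set ℕ)
    (hD0 : ∀ j, 0 ∈ D j)
    (hDlt : ∀ j, ∀ d ∈ D j, (d : ℝ) < (Q j : ℝ) / h)
    (hDB : ∀ j, IsBhg (D j) h 1)
    (l : ℕ) (hl : 1 ≤ l)
    (A : Set ℕ)
    (hAdef : A = {x | (∀ j, vdigit Q j x ∈ D j) ∧
      ∃ m, ∀ i, ¬(m + 1 ≤ i ∧ i ≤ m + l) → vdigit Q i x = 0}) :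
    ∀ n : ℕ, 1 ≤ n → repCount A h n ≤ (Nat.factorial h) ^ (l * h) := by
  intro n hn
  classical
  rcases Set.eq_empty_or_nonempty (reps A h n) with he | ⟨f0, hf0⟩
  · simp [repCount, he]
  have hQpos : ∀ j, 0 < Q j := fun j => lt_of_lt_of_le two_pos (hQ j)
  have hne : (Finset.univ : Finset (Fin h)).Nonempty := ⟨⟨0, by omega⟩, Finset.mem_univ _⟩
  have hmemD : ∀ x ∈ A, ∀ j, vdigit Q j x ∈ D j := by
    intro x hx j
    rw [hAdef] at hx
    exact hx.1 j
  -- digit sums are small: no carries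
  have hdig : ∀ f ∈ reps A h n, ∀ j, ∑ i, vdigit Q j (f i) < Q j := by
    intro f hf j
    have hlt : ∀ i : Fin h, (vdigit Q j (f i) : ℝ) < (Q j : ℝ) / h :=
      fun i => hDlt j _ (hmemD _ (hf.2.1 i) j)
    have hcast : ((∑ i, vdigit Q j (f i) : ℕ) : ℝ) < (Q j : ℝ) := by
      push_cast
      calc ∑ i, (vdigit Q j (f i) : ℝ) < ∑ _i : Fin h, (Q j : ℝ) / h :=
            Finset.sum_lt_sum_of_nonempty hne (fun i _ => hlt i)
        _ = (Q j : ℝ) := by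
            rw [Finset.sum_const, Finset.card_univ, Fintype.card_fin, nsmul_eq_mul]
            field_simp
    exact_mod_cast hcast
  have hcf : ∀ f ∈ reps A h n, ∀ j, vdigit Q j n = ∑ i, vdigit Q j (f i) :=
    fun f hf j => carry_digit Q hQpos f hf.2.2 (hdig f hf) j
  -- a bound m with n < baseProd Q m
  set m : ℕ := n with hm
  have hnP : n < baseProd Q m := by
    have h2 : 2 ^ m ≤ baseProd Q m := by
      calc 2 ^ m = ∏ _j ∈ Finset.range m, 2 := by
            rw [Finset.prod_const, Finset.card_range]
        _ ≤ baseProd Q m := Finset.prod_le_prod (fun _ _ => by omega) (fun j _ => hQ j)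
    exact lt_of_lt_of_le (Nat.lt_two_pow_self (n := n)) h2
  set S : Finset ℕ := (Finset.range m).filter (fun j => vdigit Q j n ≠ 0) with hS
  -- reconstruction: any element of a representation is determined by digits on S
  have hrec : ∀ f ∈ reps A h n, ∀ i, f i = ∑ j ∈ S, vdigit Q j (f i) * baseProd Q j := by
    intro f hf i
    have hfin : f i ≤ n := by
      have := Finset.single_le_sum (f := f) (fun i _ => Nat.zero_le _) (Finset.mem_univ i)
      rw [hf.2.2] at this; exact this
    have h1 : f i = ∑ j ∈ Finset.range m, vdigit Q j (f i) * baseProd Q j := by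
      rw [← digits_expand, Nat.mod_eq_of_lt (lt_of_le_of_lt hfin hnP)]
    refine h1.trans (Finset.sum_subset (Finset.filter_subset _ _) ?_).symm
    intro j hj hjS
    have h0 : vdigit Q j n = 0 := by
      by_contra h0
      exact hjS (Finset.mem_filter.mpr ⟨hj, h0⟩)
    rw [hcf f hf j] at h0
    have := (Finset.sum_eq_zero_iff.mp h0) i (Finset.mem_univ i)
    rw [this, zero_mul]
  -- S has at most l*h elements
  have hScard : S.card ≤ l * h := by
    have hw : ∀ i : Fin h, ∃ w, ∀ j, ¬(w + 1 ≤ j ∧ j ≤ w + l) → vdigit Q j (f0 i) = 0 := by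
      intro i
      have := hf0.2.1 i
      rw [hAdef] at this
      exact this.2
    choose w hwspec using hw
    have hsub : S ⊆ Finset.univ.biUnion (fun i : Fin h => Finset.Icc (w i + 1) (w i + l)) := by
      intro j hj
      have hj0 : vdigit Q j n ≠ 0 := (Finset.mem_filter.mp hj).2
      rw [hcf f0 hf0 j] at hj0
      obtain ⟨i, -, hi⟩ := Finset.exists_ne_zero_of_sum_ne_zero hj0
      refine Finset.mem_biUnion.mpr ⟨i, Finset.mem_univ i, ?_⟩
      rw [Finset.mem_Icc]
      by_contra hc
      exact hi (hwspec i j (by omega))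
    calc S.card ≤ ∑ i : Fin h, (Finset.Icc (w i + 1) (w i + l)).card :=
          le_trans (Finset.card_le_card hsub) (Finset.card_biUnion_le)
      _ = ∑ _i : Fin h, l := by
          refine Finset.sum_congr rfl fun i _ => ?_
          rw [Nat.card_Icc]; omega
      _ = l * h := by rw [Finset.sum_const, Finset.card_univ, Fintype.card_fin, smul_eq_mul,
          mul_comm]
  -- the sorted digit tuple at each position is uniquely determined
  have hsorted : ∀ f ∈ reps A h n, ∀ j : ℕ,
      (fun i => vdigit Q j (f i)) ∘ (Tuple.sort (fun i => vdigit Q j (f i)))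
        = (fun i => vdigit Q j (f0 i)) ∘ (Tuple.sort (fun i => vdigit Q j (f0 i))) := by
    intro f hf j
    have hmem : ∀ f' ∈ reps A h n,
        ((fun i => vdigit Q j (f' i)) ∘ (Tuple.sort (fun i => vdigit Q j (f' i))))
          ∈ reps (D j) h (vdigit Q j n) := by
      intro f' hf'
      refine ⟨Tuple.monotone_sort _, fun i => hmemD _ (hf'.2.1 _) j, ?_⟩
      rw [hcf f' hf' j]
      exact Equiv.sum_comp (Tuple.sort (fun i => vdigit Q j (f' i))) (fun i => vdigit Q j (f' i))
    exact reps_subsingleton (hDB j (vdigit Q j n)) _ (hmem f hf) _ (hmem f0 hf0)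
  -- the encoding by sorting permutations
  let E : ↥(reps A h n) → (S → Equiv.Perm (Fin h)) :=
    fun f j => Tuple.sort (fun i => vdigit Q (j : ℕ) ((f : Fin h → ℕ) i))
  have hEinj : Function.Injective E := by
    intro ⟨f, hf⟩ ⟨f', hf'⟩ hE
    have hdigeq : ∀ j ∈ S, ∀ i, vdigit Q j (f i) = vdigit Q j (f' i) := by
      intro j hj i
      have h1 := hsorted f hf j
      have h2 := hsorted f' hf' j
      have hperm : Tuple.sort (fun i => vdigit Q j (f i))
          = Tuple.sort (fun i => vdigit Q j (f' i)) := congrFun hE ⟨j, hj⟩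
      have : (fun i => vdigit Q j (f i)) ∘ (Tuple.sort (fun i => vdigit Q j (f i)))
          = (fun i => vdigit Q j (f' i)) ∘ (Tuple.sort (fun i => vdigit Q j (f i))) := by
        rw [h1, hperm, h2]
      have := congrFun this ((Tuple.sort (fun i => vdigit Q j (f i)))⁻¹ i)
      simpa using this
    have : f = f' := by
      funext i
      rw [hrec f hf i, hrec f' hf' i]
      exact Finset.sum_congr rfl fun j hj => by rw [hdigeq j hj i]
    exact Subtype.ext this
  -- count
  rw [repCount, ← Nat.card_coe_set_eq]
  calc Nat.card ↥(reps A h n) ≤ Nat.card (S → Equiv.Perm (Fin h)) :=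
        Nat.card_le_card_of_injective E hEinj
    _ = (Nat.factorial h) ^ S.card := by
        rw [Nat.card_eq_fintype_card, Fintype.card_fun, Fintype.card_perm, Fintype.card_fin,
          Fintype.card_coe]
    _ ≤ (Nat.factorial h) ^ (l * h) :=
        Nat.pow_le_pow_right (Nat.factorial_pos h) hScard
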